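/- arXiv:1001.1334 — 4 statements merged into one kernel-verified Lean document; each statement's English description precedes it below -/
import Mathlib

section
/- Let r ≥ 1 be an integer, n ≥ 1, and let M be an n×n integer matrix each of whose rows sums to zero. Suppose there exist indices i₀, j₀ such that the (i₀, j₀) first minor D of M is coprime to r (gcd(|D|, r) = 1). Then for every vector v : Fin n → ZMod r, the reduction of M modulo r satisfies M·v = 0 if and only if v is constant. -/
/-- If an integer square matrix has all row sums zero and some first minor coprime to `r`,
then the solutions mod `r` of the associated homogeneous system are exactly
the constant vectors. -/
theorem mulVec_eq_zero_iff_constant_of_minor_coprime {r : ℕ} (hr : 1 ≤ r) {n : ℕ}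
    (M : Matrix (Fin (n + 1)) (Fin (n + 1)) ℤ)
    (hrow : ∀ i, ∑ j, M i j = 0)
    (i₀ j₀ : Fin (n + 1))
    (hD : Nat.gcd (M.submatrix i₀.succAbove j₀.succAbove).det.natAbs r = 1) :
    ∀ v : Fin (n + 1) → ZMod r,
      (M.map (Int.cast : ℤ → ZMod r)).mulVec v = 0 ↔ ∀ i j, v i = v j := by
  intro v
  set A := M.map (Int.cast : ℤ → ZMod r) with hA
  have hrowA : ∀ i, ∑ j, A i j = 0 := by
    intro i
    have h1 : ((∑ j, M i j : ℤ) : ZMod r) = 0 := by rw [hrow i]; simp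
    simpa [hA, Matrix.map_apply] using h1
  constructor
  · intro h
    -- the minor is invertible mod r
    set N := (M.submatrix i₀.succAbove j₀.succAbove).map (Int.cast : ℤ → ZMod r) with hN
    have hdetN : IsUnit N.det := by
      have h1 : N.det = ((M.submatrix i₀.succAbove j₀.succAbove).det : ZMod r) := by
        simpa using (RingHom.map_det (Int.castRingHom (ZMod r)) (M.submatrix i₀.succAbove j₀.succAbove)).symm
      have h2 : IsUnit (((M.submatrix i₀.succAbove j₀.succAbove).det.natAbs : ℕ) : ZMod r) :=
        (ZMod.isUnit_iff_coprime _ r).mpr hD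
      rcases Int.natAbs_eq (M.submatrix i₀.succAbove j₀.succAbove).det with he | he
      · rw [h1, he, Int.cast_natCast]; exact h2
      · rw [h1, he, Int.cast_neg, Int.cast_natCast]; exact h2.neg
    -- the difference vector restricted to columns ≠ j₀ is killed by N
    set w : Fin n → ZMod r := fun k => v (j₀.succAbove k) - v j₀ with hw
    have hNw : N.mulVec w = 0 := by
      funext i
      have hrow' : ∑ j, A (i₀.succAbove i) j * v j = 0 := by
        have := congrFun h (i₀.succAbove i)
        simpa [Matrix.mulVec, dotProduct] using this
      have hs1 : A (i₀.succAbove i) j₀ * v j₀ +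
          ∑ k, A (i₀.succAbove i) (j₀.succAbove k) * v (j₀.succAbove k) = 0 := by
        rw [← Fin.sum_univ_succAbove (fun j => A (i₀.succAbove i) j * v j) j₀]
        exact hrow'
      have hs2 : A (i₀.succAbove i) j₀ +
          ∑ k, A (i₀.succAbove i) (j₀.succAbove k) = 0 := by
        rw [← Fin.sum_univ_succAbove (fun j => A (i₀.succAbove i) j) j₀]
        exact hrowA _
      have : N.mulVec w i = ∑ k, A (i₀.succAbove i) (j₀.succAbove k) * (v (j₀.succAbove k) - v j₀) := by
        simp [hN, hA, Matrix.mulVec, dotProduct, hw, Matrix.map_apply]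
      rw [this]
      simp only [mul_sub, Finset.sum_sub_distrib, ← Finset.sum_mul]
      have e1 : ∑ k, A (i₀.succAbove i) (j₀.succAbove k) * v (j₀.succAbove k)
          = - (A (i₀.succAbove i) j₀ * v j₀) := by linear_combination hs1
      have e2 : ∑ k, A (i₀.succAbove i) (j₀.succAbove k)
          = - A (i₀.succAbove i) j₀ := by linear_combination hs2
      rw [e1, e2]
      ring_nf
      simp
    have hw0 : w = 0 := by
      have := congrArg (fun u => N⁻¹.mulVec u) hNw
      simpa [Matrix.mulVec_mulVec, Matrix.nonsing_inv_mul N hdetN] using this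
    have hvj : ∀ j, v j = v j₀ := by
      intro j
      rcases eq_or_ne j j₀ with rfl | hj
      · rfl
      · obtain ⟨k, rfl⟩ := Fin.exists_succAbove_eq hj
        have := congrFun hw0 k
        simp only [hw, Pi.zero_apply, sub_eq_zero] at this
        exact this
    intro i j
    rw [hvj i, hvj j]
  · intro hc
    funext i
    have : ∀ j, v j = v 0 := fun j => hc j 0
    calc A.mulVec v i = ∑ j, A i j * v j := by simp [Matrix.mulVec, dotProduct]
      _ = (∑ j, A i j) * v 0 := by rw [Finset.sum_mul]; exact Finset.sum_congr rfl fun j _ => by rw [this j]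
      _ = 0 := by rw [hrowA i]; simp
end

section
/- Let p be a prime, n ≥ 2, and let M be an n×n matrix over the field ZMod p. If every (i, j) first minor of M is zero, then there exists a nonconstant vector v : Fin n → ZMod p with M·v = 0. -/
/-- If all first minors of a square matrix (of size at least 2) over `ZMod p` (`p` prime)
vanish, then the homogeneous system has a nonconstant solution. -/
theorem exists_nonconstant_mulVec_eq_zero_of_minors_eq_zero {p : ℕ} (hp : p.Prime) {n : ℕ}
    (M : Matrix (Fin (n + 2)) (Fin (n + 2)) (ZMod p))
    (hminor : ∀ i j : Fin (n + 2), (M.submatrix i.succAbove j.succAbove).det = 0) :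
    ∃ v : Fin (n + 2) → ZMod p, (¬ ∀ i j, v i = v j) ∧ M.mulVec v = 0 := by
  haveI : Fact p.Prime := ⟨hp⟩
  -- det M = 0 by Laplace expansion along column 0
  have hdet : M.det = 0 := by
    rw [Matrix.det_succ_column_zero]
    apply Finset.sum_eq_zero
    intro i _
    have := hminor i 0
    rw [Fin.succAbove_zero] at this
    rw [this, mul_zero]
  -- get a left kernel vector u ≠ 0
  obtain ⟨u, hu, huM⟩ := (Matrix.exists_vecMul_eq_zero_iff).mpr hdet
  obtain ⟨i, hui⟩ : ∃ i, u i ≠ 0 := by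
    by_contra h
    push_neg at h
    exact hu (funext h)
  -- get a kernel vector of the (i,0) minor
  obtain ⟨w, hw, hAw⟩ := (Matrix.exists_mulVec_eq_zero_iff).mpr (hminor i 0)
  obtain ⟨l, hwl⟩ : ∃ l, w l ≠ 0 := by
    by_contra h
    push_neg at h
    exact hw (funext h)
  -- extend w by a zero at position 0
  set v : Fin (n + 2) → ZMod p := (0 : Fin (n + 2)).insertNth 0 w with hv
  have hv0 : v 0 = 0 := by rw [hv]; exact Fin.insertNth_apply_same (α := fun _ => ZMod p) 0 0 w
  have hvs : ∀ r, v ((0 : Fin (n + 2)).succAbove r) = w r := by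
    intro r; rw [hv]; exact Fin.insertNth_apply_succAbove (α := fun _ => ZMod p) 0 0 w r
  -- rows other than i vanish
  have hrow : ∀ r : Fin (n + 1), M.mulVec v (i.succAbove r) = 0 := by
    intro r
    have : M.mulVec v (i.succAbove r)
        = ∑ m, M (i.succAbove r) m * v m := rfl
    rw [this, Fin.sum_univ_succAbove (fun m => M (i.succAbove r) m * v m) 0]
    simp only [hv0, mul_zero, zero_add]
    have : ∀ s, M (i.succAbove r) ((0 : Fin (n + 2)).succAbove s) * v ((0 : Fin (n + 2)).succAbove s)
        = (M.submatrix i.succAbove (Fin.succAbove 0)) r s * w s := by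
      intro s
      rw [hvs s]
      rfl
    rw [Finset.sum_congr rfl fun s _ => this s]
    have : ∑ s, (M.submatrix i.succAbove (Fin.succAbove 0)) r s * w s
        = (M.submatrix i.succAbove (Fin.succAbove 0)).mulVec w r := rfl
    rw [this]
    rw [Fin.succAbove_zero] at hAw ⊢
    rw [hAw]
    rfl
  -- row i also vanishes, using u
  have hdot : dotProduct u (M.mulVec v) = 0 := by
    rw [Matrix.dotProduct_mulVec, huM, zero_dotProduct]
  have hrowi : M.mulVec v i = 0 := by
    have hsum : dotProduct u (M.mulVec v) = u i * M.mulVec v i := by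
      rw [dotProduct, Fin.sum_univ_succAbove (fun k => u k * M.mulVec v k) i]
      simp only [hrow, mul_zero, Finset.sum_const_zero, add_zero]
    rw [hsum] at hdot
    exact (mul_eq_zero.mp hdot).resolve_left hui
  have hMv : M.mulVec v = 0 := by
    funext k
    rw [Pi.zero_apply]
    rcases eq_or_ne k i with h | h
    · rw [h]; exact hrowi
    · obtain ⟨r, rfl⟩ := Fin.exists_succAbove_eq h
      exact hrow r
  refine ⟨v, ?_, hMv⟩
  intro hconst
  apply hwl
  rw [← hvs l, hconst _ 0, hv0]
end

section
/- Let r > 1 and n ≥ 2 be integers, let M be an n×n integer matrix each of whose rows sums to zero, and suppose there is a nonzero natural number D such that every (i, j) first minor of M has absolute value D. Then there exists a nonconstant vector v : Fin n → ZMod r with M·v = 0 (M reduced modulo r) if and only if gcd(r, D) ≠ 1. -/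
/-- If all maximal minors of an `(m+1) × m` matrix over a field vanish, its columns are
linearly dependent. -/
lemma aux_kernel_of_minors_zero {k : Type*} [Field k] {m : ℕ}
    (B : Matrix (Fin (m + 1)) (Fin m) k)
    (h : ∀ i : Fin (m + 1), (B.submatrix i.succAbove id).det = 0) :
    ∃ w : Fin m → k, w ≠ 0 ∧ B.mulVec w = 0 := by
  by_contra hker
  push_neg at hker
  have hker' : ∀ w : Fin m → k, B.mulVec w = 0 → w = 0 := by
    intro w hw
    by_contra hw0
    exact hker w hw0 hw
  have hrange : ∀ i : Fin (m + 1), Pi.single i (1 : k) ∈ LinearMap.range B.mulVecLin := by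
    intro i
    obtain ⟨w, hw0, hw⟩ := Matrix.exists_mulVec_eq_zero_iff.2 (h i)
    set d := B.mulVec w i with hd
    have hBw : B.mulVec w = fun j => if j = i then d else 0 := by
      funext j
      by_cases hj : j = i
      · simp [hj, hd]
      · obtain ⟨z, hz⟩ := Fin.exists_succAbove_eq hj
        have hz' : (B.submatrix i.succAbove id).mulVec w z = 0 := by rw [hw]; rfl
        simp only [Matrix.mulVec, dotProduct, Matrix.submatrix_apply, id_eq] at hz' ⊢
        rw [if_neg hj, ← hz]
        exact hz'
    have hdne : d ≠ 0 := by
      intro h0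
      apply hw0
      apply hker' w
      rw [hBw]
      funext j
      simp [h0]
    refine ⟨d⁻¹ • w, ?_⟩
    rw [Matrix.mulVecLin_apply, Matrix.mulVec_smul, hBw]
    funext j
    by_cases hj : j = i <;> simp [hj, Pi.single_apply, inv_mul_cancel₀ hdne]
  have htop : LinearMap.range B.mulVecLin = ⊤ := by
    rw [Submodule.eq_top_iff']
    intro v
    have hv : v = ∑ i, v i • (Pi.single i (1 : k) : Fin (m + 1) → k) := by
      funext j
      rw [Finset.sum_apply]
      simp [Pi.single_apply]
    rw [hv]
    exact Submodule.sum_mem _ fun i _ => Submodule.smul_mem _ _ (hrange i)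
  have h2 := LinearMap.finrank_range_le (B.mulVecLin)
  rw [htop, finrank_top] at h2
  simp only [Module.finrank_fin_fun] at h2
  omega

/-- Matrix form of Proposition 1: for an integer coloring-type matrix (all row sums zero,
all first minors of common nonzero absolute value `D`), the homogeneous system mod `r`
has a nonconstant solution iff `gcd(r, D) ≠ 1`. -/
theorem exists_nonconstant_solution_iff_gcd_ne_one {r : ℕ} (hr : 1 < r) {n : ℕ}
    (M : Matrix (Fin (n + 2)) (Fin (n + 2)) ℤ)
    (hrow : ∀ i, ∑ j, M i j = 0)
    (D : ℕ) (hD : D ≠ 0)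
    (hminor : ∀ i j : Fin (n + 2), (M.submatrix i.succAbove j.succAbove).det.natAbs = D) :
    (∃ v : Fin (n + 2) → ZMod r,
        (¬ ∀ i j, v i = v j) ∧ (M.map (Int.cast : ℤ → ZMod r)).mulVec v = 0) ↔
      Nat.gcd r D ≠ 1 := by
  have hr0 : r ≠ 0 := by omega
  haveI : NeZero r := ⟨hr0⟩
  constructor
  · -- nonconstant solution → gcd ≠ 1 (contrapositive)
    rintro ⟨v, hvnc, hv⟩ hgcd
    apply hvnc
    intro i j
    set N := M.map (Int.cast : ℤ → ZMod r) with hNdef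
    set w : Fin (n + 2) → ZMod r := fun c => v c - v j with hwdef
    have hN1 : N.mulVec (fun _ => v j) = 0 := by
      funext a
      have h0 : ((∑ c, M a c : ℤ) : ZMod r) = 0 := by rw [hrow a]; simp
      push_cast at h0
      simp only [Matrix.mulVec, dotProduct, hNdef, Matrix.map_apply]
      rw [← Finset.sum_mul, h0, zero_mul]
      rfl
    have hw : N.mulVec w = 0 := by
      have hsub : w = v - (fun _ => v j) := rfl
      rw [hsub, Matrix.mulVec_sub, hv, hN1, sub_zero]
    set A := N.submatrix i.succAbove j.succAbove with hAdef
    set w' : Fin (n + 1) → ZMod r := fun l => w (j.succAbove l) with hw'def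
    have hwj : w j = 0 := by simp [hwdef]
    have hA : A.mulVec w' = 0 := by
      funext kk
      have hsum := Fin.sum_univ_succAbove (fun c => N (i.succAbove kk) c * w c) j
      have h0 : N.mulVec w (i.succAbove kk) = 0 := by rw [hw]; rfl
      simp only [Matrix.mulVec, dotProduct] at h0
      rw [h0, hwj, mul_zero, zero_add] at hsum
      simp only [Matrix.mulVec, dotProduct, hAdef, Matrix.submatrix_apply]
      rw [← hsum]
      rfl
    have hu : IsUnit A.det := by
      have hAmap : A = ((Int.castRingHom (ZMod r)).mapMatrix
          (M.submatrix i.succAbove j.succAbove)) := by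
        funext a b
        simp [hAdef, hNdef, Matrix.submatrix_apply, Matrix.map_apply]
      have hdet : A.det = (((M.submatrix i.succAbove j.succAbove).det : ℤ) : ZMod r) := by
        rw [hAmap, ← RingHom.map_det]
        rfl
      have hDunit : IsUnit ((D : ℕ) : ZMod r) := by
        rw [ZMod.isUnit_iff_coprime]
        exact Nat.coprime_comm.mp hgcd
      rcases Int.natAbs_eq (M.submatrix i.succAbove j.succAbove).det with he | he
      · rw [hdet, he, hminor i j]; exact_mod_cast hDunit
      · rw [hdet, he, hminor i j]
        push_cast
        exact hDunit.neg
    have h2 : A.det • w' = 0 := by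
      have h3 := Matrix.mulVec_mulVec w' A.adjugate A
      rw [Matrix.adjugate_mul, hA, Matrix.mulVec_zero, Matrix.smul_mulVec,
        Matrix.one_mulVec] at h3
      exact h3.symm
    have hwall : ∀ c, w c = 0 := by
      intro c
      by_cases hc : c = j
      · rw [hc]; exact hwj
      · obtain ⟨l, hl⟩ := Fin.exists_succAbove_eq hc
        have h4 := congrFun h2 l
        simp only [Pi.smul_apply, smul_eq_mul, Pi.zero_apply] at h4
        have h5 : w' l = 0 := (hu.mul_right_eq_zero).mp h4
        rw [← hl]
        exact h5
    have := hwall i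
    rw [hwdef] at this
    exact sub_eq_zero.mp this
  · -- gcd ≠ 1 → nonconstant solution exists
    intro hgcd
    obtain ⟨p, hp, hpg⟩ := Nat.exists_prime_and_dvd hgcd
    have hpr : p ∣ r := hpg.trans (Nat.gcd_dvd_left r D)
    have hpD : p ∣ D := hpg.trans (Nat.gcd_dvd_right r D)
    haveI : Fact p.Prime := ⟨hp⟩
    set B : Matrix (Fin (n + 2)) (Fin (n + 1)) (ZMod p) :=
      Matrix.of fun i l => ((M i (Fin.succ l) : ℤ) : ZMod p) with hBdef
    have hBminor : ∀ i : Fin (n + 2), (B.submatrix i.succAbove id).det = 0 := by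
      intro i
      have heq : B.submatrix i.succAbove id = ((Int.castRingHom (ZMod p)).mapMatrix
          (M.submatrix i.succAbove ((0 : Fin (n + 2)).succAbove))) := by
        funext a b
        simp [hBdef, Matrix.submatrix_apply, Fin.succAbove_zero]
      rw [heq, ← RingHom.map_det]
      have hdvd : (p : ℤ) ∣ (M.submatrix i.succAbove ((0 : Fin (n + 2)).succAbove)).det := by
        apply Int.dvd_natAbs.mp
        rw [hminor i 0]
        exact_mod_cast hpD
      simpa [Int.castRingHom, ZMod.intCast_zmod_eq_zero_iff_dvd] using
        (ZMod.intCast_zmod_eq_zero_iff_dvd _ p).mpr hdvd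
    obtain ⟨w', hw'0, hw'⟩ := aux_kernel_of_minors_zero B hBminor
    set w : Fin (n + 2) → ZMod p := Fin.cons 0 w' with hwdef
    have hwker : ∀ a, ∑ c, ((M a c : ℤ) : ZMod p) * w c = 0 := by
      intro a
      rw [Fin.sum_univ_succ]
      have h1 : w (0 : Fin (n + 2)) = 0 := rfl
      rw [h1, mul_zero, zero_add]
      have h2 : ∑ l : Fin (n + 1), ((M a l.succ : ℤ) : ZMod p) * w l.succ
          = B.mulVec w' a := by
        simp only [Matrix.mulVec, dotProduct, hBdef, Matrix.of_apply, hwdef,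
          Fin.cons_succ]
      rw [h2, hw']
      rfl
    obtain ⟨l0, hl0⟩ : ∃ l, w' l ≠ 0 := Function.ne_iff.mp hw'0
    set q : ℕ := r / p with hqdef
    have hqp : q * p = r := Nat.div_mul_cancel hpr
    have hq0 : q ≠ 0 := by
      intro h0
      rw [h0, zero_mul] at hqp
      exact hr0 hqp.symm
    set W : Fin (n + 2) → ℤ := fun c => ((w c).val : ℤ) with hWdef
    have hWcast : ∀ c, ((W c : ℤ) : ZMod p) = w c := by
      intro c
      rw [hWdef]
      push_cast
      exact ZMod.natCast_rightInverse (w c)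
    refine ⟨fun c => (((q : ℤ) * W c : ℤ) : ZMod r), ?_, ?_⟩
    · intro hconst
      have hc := hconst (Fin.succ l0) 0
      have hw0 : W (0 : Fin (n + 2)) = 0 := by
        simp [hWdef, hwdef]
      have hc2 : (((q : ℤ) * W (Fin.succ l0) : ℤ) : ZMod r) = 0 := by
        simpa [hw0] using hc
      have hdvd : (r : ℤ) ∣ (q : ℤ) * W (Fin.succ l0) :=
        (ZMod.intCast_zmod_eq_zero_iff_dvd _ r).mp hc2
      have hr' : (r : ℤ) = (q : ℤ) * (p : ℤ) := by exact_mod_cast hqp.symm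
      rw [hr'] at hdvd
      have hpd : (p : ℤ) ∣ W (Fin.succ l0) := by
        have hq0' : (q : ℤ) ≠ 0 := by exact_mod_cast hq0
        exact (mul_dvd_mul_iff_left hq0').mp hdvd
      have : w (Fin.succ l0) = 0 := by
        rw [← hWcast]
        exact (ZMod.intCast_zmod_eq_zero_iff_dvd _ p).mpr hpd
      rw [hwdef, Fin.cons_succ] at this
      exact hl0 this
    · funext a
      have hdvd : (p : ℤ) ∣ ∑ c, M a c * W c := by
        rw [← ZMod.intCast_zmod_eq_zero_iff_dvd]
        push_cast
        have : ∑ c, ((M a c : ℤ) : ZMod p) * ((W c : ℤ) : ZMod p)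
            = ∑ c, ((M a c : ℤ) : ZMod p) * w c := by
          apply Finset.sum_congr rfl
          intro c _
          rw [hWcast]
        rw [this, hwker]
      obtain ⟨y, hy⟩ := hdvd
      have hsum : ∑ c, M a c * ((q : ℤ) * W c) = (r : ℤ) * y := by
        have : ∑ c, M a c * ((q : ℤ) * W c) = (q : ℤ) * ∑ c, M a c * W c := by
          rw [Finset.mul_sum]
          apply Finset.sum_congr rfl
          intro c _
          ring
        rw [this, hy, ← mul_assoc]
        congr 1
        exact_mod_cast hqp
      show (M.map (Int.cast : ℤ → ZMod r)).mulVec (fun c => (((q : ℤ) * W c : ℤ) : ZMod r)) a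
          = 0
      simp only [Matrix.mulVec, dotProduct, Matrix.map_apply]
      have : ∑ c, ((M a c : ℤ) : ZMod r) * (((q : ℤ) * W c : ℤ) : ZMod r)
          = ((∑ c, M a c * ((q : ℤ) * W c) : ℤ) : ZMod r) := by
        push_cast
        rfl
      rw [this, hsum]
      simp [ZMod.intCast_zmod_eq_zero_iff_dvd]
end

section
/- Let r > 1 and n ≥ 1 be integers, let c : Fin n → ℕ satisfy c 0 = 0, c i < r for all i, and c i ≠ 0 for some i, and let T be a set of triples of indices from Fin n such that r divides 2·c(i₁) − c(i₂) − c(i₃) for every (i₁, i₂, i₃) ∈ T. Then there exist a prime p dividing r and a map d : Fin n → ZMod p such that: (a) 2·d(i₁) = d(i₂) + d(i₃) for every (i₁, i₂, i₃) ∈ T; (b) d is not constant; and (c) d i = d j whenever c i = c j. -/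
/-- Arithmetic core of the Main Lemma: a nonconstant `r`-coloring (with one color `0`)
induces, for some prime `p ∣ r`, a nonconstant `p`-coloring which identifies equal
colors. -/
theorem exists_prime_coloring_of_coloring {r : ℕ} (hr : 1 < r) {n : ℕ}
    (c : Fin (n + 1) → ℕ) (hc0 : c 0 = 0) (hcr : ∀ i, c i < r) (hne : ∃ i, c i ≠ 0)
    (T : Set (Fin (n + 1) × Fin (n + 1) × Fin (n + 1)))
    (hT : ∀ t ∈ T, (r : ℤ) ∣ 2 * (c t.1 : ℤ) - (c t.2.1 : ℤ) - (c t.2.2 : ℤ)) :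
    ∃ p : ℕ, p.Prime ∧ p ∣ r ∧
      ∃ d : Fin (n + 1) → ZMod p,
        (∀ t ∈ T, 2 * d t.1 = d t.2.1 + d t.2.2) ∧
        (¬ ∀ i j, d i = d j) ∧
        (∀ i j, c i = c j → d i = d j) := by
  set G : ℕ := Finset.univ.gcd c with hG
  set g : ℕ := Nat.gcd r G with hgdef
  have hgr : g ∣ r := Nat.gcd_dvd_left r G
  have hgc : ∀ i, g ∣ c i := fun i =>
    (Nat.gcd_dvd_right r G).trans (Finset.gcd_dvd (Finset.mem_univ i))
  have hrpos : 0 < r := by omega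
  have hgpos : 0 < g := Nat.gcd_pos_of_pos_left G hrpos
  obtain ⟨i0, hi0⟩ := hne
  have hglt : g < r := lt_of_le_of_lt (Nat.le_of_dvd (Nat.pos_of_ne_zero hi0) (hgc i0)) (hcr i0)
  set m : ℕ := r / g with hmdef
  have hgm : g * m = r := Nat.mul_div_cancel' hgr
  have hm1 : 1 < m := by
    rcases Nat.lt_or_ge m 2 with h | h
    · interval_cases m <;> omega
    · omega
  set p : ℕ := m.minFac with hpdef
  have hp : p.Prime := Nat.minFac_prime (by omega)
  have hpm : p ∣ m := Nat.minFac_dvd m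
  have hpr : p ∣ r := hpm.trans ⟨g, by rw [← hgm]; ring⟩
  haveI : NeZero p := ⟨hp.pos.ne'⟩
  set a : Fin (n + 1) → ℕ := fun i => c i / g with hadef
  have hga : ∀ i, g * a i = c i := fun i => Nat.mul_div_cancel' (hgc i)
  refine ⟨p, hp, hpr, fun i => ((a i : ℕ) : ZMod p), ?_, ?_, ?_⟩
  · intro t ht
    have h1 := hT t ht
    have h2 : (g : ℤ) * (m : ℤ) ∣ (g : ℤ) * (2 * (a t.1 : ℤ) - (a t.2.1 : ℤ) - (a t.2.2 : ℤ)) := by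
      have : (g : ℤ) * (2 * (a t.1 : ℤ) - (a t.2.1 : ℤ) - (a t.2.2 : ℤ))
          = 2 * (c t.1 : ℤ) - (c t.2.1 : ℤ) - (c t.2.2 : ℤ) := by
        have e1 := hga t.1; have e2 := hga t.2.1; have e3 := hga t.2.2
        push_cast [← e1, ← e2, ← e3]; ring
      rw [this]
      have : ((g * m : ℕ) : ℤ) = (r : ℤ) := by exact_mod_cast hgm
      push_cast at this
      rw [this]; exact h1
    have h3 : (m : ℤ) ∣ 2 * (a t.1 : ℤ) - (a t.2.1 : ℤ) - (a t.2.2 : ℤ) :=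
      (mul_dvd_mul_iff_left (by exact_mod_cast hgpos.ne' : (g : ℤ) ≠ 0)).mp h2
    have h4 : (p : ℤ) ∣ 2 * (a t.1 : ℤ) - (a t.2.1 : ℤ) - (a t.2.2 : ℤ) :=
      (Int.natCast_dvd_natCast.mpr hpm).trans h3
    have h5 : ((2 * (a t.1 : ℤ) - (a t.2.1 : ℤ) - (a t.2.2 : ℤ) : ℤ) : ZMod p) = 0 :=
      (ZMod.intCast_zmod_eq_zero_iff_dvd _ p).mpr h4
    push_cast at h5
    linear_combination h5
  · intro hconst
    -- all d i are equal; d 0 = 0, so p ∣ a i for all i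
    have hd0 : ((a 0 : ℕ) : ZMod p) = 0 := by
      have : a 0 = 0 := by simp [hadef, hc0]
      simp [this]
    have hpa : ∀ i, p ∣ a i := by
      intro i
      have := (hconst i 0).trans hd0
      exact (ZMod.natCast_eq_zero_iff _ p).mp this
    have hgpc : ∀ i, g * p ∣ c i := by
      intro i
      obtain ⟨k, hk⟩ := hpa i
      exact ⟨k, by rw [← hga i, hk]; ring⟩
    have hgpG : g * p ∣ G := Finset.dvd_gcd fun i _ => hgpc i
    have hgpr : g * p ∣ r := by
      obtain ⟨k, hk⟩ := hpm
      exact ⟨k, by rw [← hgm, hk]; ring⟩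
    have : g * p ∣ g := Nat.dvd_gcd hgpr hgpG
    have hle : g * p ≤ g := Nat.le_of_dvd hgpos this
    have : g * 2 ≤ g * p := Nat.mul_le_mul_left g hp.two_le
    omega
  · intro i j hij
    simp [hadef, hij]
end
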